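/- Let G be a simple graph whose twin-quotient H is isomorphic to the line graph of some simple graph H′. Then G is a line graph of a multigraph: there exist a vertex type V′, an edge type E′, and an endpoint map ends : E′ → Sym2 V′ with ends e non-diagonal (no loops) for every e, such that G is isomorphic to the simple graph on vertex set E′ in which distinct e and f are adjacent if and only if ends e and ends f share a common vertex. (The multigraph is obtained from H′ by replacing each edge by a number of parallel edges equal to the size of the corresponding twin-equivalence class.) -/

import Mathlib

/-- Two vertices are *true twins* if they are adjacent and have the same
closed neighborhood. -/
def TrueTwins {V : Type*} (G : SimpleGraph V) (u v : V) : Prop :=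
  G.Adj u v ∧ ∀ w, w ≠ u → w ≠ v → (G.Adj w u ↔ G.Adj w v)

/-- The twin equivalence: `u = v` or `u` and `v` are true twins. -/
def twinSetoid {V : Type*} (G : SimpleGraph V) : Setoid V where
  r u v := u = v ∨ TrueTwins G u v
  iseqv := by
    constructor
    · intro u; exact Or.inl rfl
    · rintro u v (rfl | ⟨hadj, hnb⟩)
      · exact Or.inl rfl
      · exact Or.inr ⟨hadj.symm, fun w h1 h2 => (hnb w h2 h1).symm⟩
    · rintro u v w (rfl | huv) (rfl | hvw)
      · exact Or.inl rfl
      · exact Or.inr hvw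
      · exact Or.inr huv
      · by_cases huw : u = w
        · exact Or.inl huw
        · refine Or.inr ⟨(hvw.2 u huv.1.ne huw).mp huv.1, fun x hxu hxw => ?_⟩
          by_cases hxv : x = v
          · subst hxv
            exact iff_of_true huv.1.symm hvw.1
          · exact (huv.2 x hxu hxv).trans (hvw.2 x hxv hxw)

/-- The *twin-quotient* of `G`: vertices are twin-equivalence classes, two distinct
classes being adjacent iff some representatives are adjacent in `G`. -/
def twinQuotient {V : Type*} (G : SimpleGraph V) :
    SimpleGraph (Quotient (twinSetoid G)) where
  Adj C D := C ≠ D ∧ ∃ u v : V,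
    Quotient.mk (twinSetoid G) u = C ∧ Quotient.mk (twinSetoid G) v = D ∧ G.Adj u v
  symm := ⟨by
    rintro C D ⟨hne, u, v, hu, hv, hadj⟩
    exact ⟨hne.symm, v, u, hv, hu, hadj.symm⟩⟩
  loopless := ⟨by rintro C ⟨hne, -⟩; exact hne rfl⟩

/-- The line graph of a multigraph given by an endpoint map `ends : E' → Sym2 V'`:
the vertices are the edges `E'`, two distinct edges being adjacent iff their endpoint
pairs share a common vertex. -/
def multiLineGraph {V' E' : Type*} (ends : E' → Sym2 V') : SimpleGraph E' where
  Adj e f := e ≠ f ∧ ∃ x, x ∈ ends e ∧ x ∈ ends f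
  symm := ⟨by rintro e f ⟨hne, x, hxe, hxf⟩; exact ⟨hne.symm, x, hxf, hxe⟩⟩
  loopless := ⟨by rintro e ⟨hne, -⟩; exact hne rfl⟩


/-!
Twins in one class are adjacent, and between two different classes adjacency does not depend on
the chosen representatives. So `G` is the blow-up of its twin-quotient in which every vertex
becomes a clique: `u` and `v` are adjacent iff they are distinct and their classes are equal or
adjacent. In a line graph, blowing a vertex up into a clique amounts to replacing that edge by
parallel copies, so precomposing the endpoint map of `H'` with the quotient map exhibits `G` as the
line graph of a multigraph.
-/

section TwinQuotient

variable {V : Type*} {G : SimpleGraph V}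

lemma adj_iff_of_twinSetoid {u u' w : V} (huu' : twinSetoid G u u') (hw : ¬ twinSetoid G u w) :
    G.Adj u w ↔ G.Adj u' w := by
  have hwu' : w ≠ u' := by rintro rfl; exact hw huu'
  rcases huu' with rfl | ⟨-, hnb⟩
  · rfl
  · rw [G.adj_comm u, G.adj_comm u']
    exact hnb w (fun h => hw (Or.inl h.symm)) hwu'

lemma twinQuotient_adj_mk_iff {u v : V} :
    (twinQuotient G).Adj (Quotient.mk _ u) (Quotient.mk _ v) ↔
      Quotient.mk (twinSetoid G) u ≠ Quotient.mk _ v ∧ G.Adj u v := by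
  refine ⟨fun ⟨hne, u', v', hu', hv', hadj⟩ => ⟨hne, ?_⟩,
    fun ⟨hne, hadj⟩ => ⟨hne, u, v, rfl, rfl, hadj⟩⟩
  have hv'u' : ¬ twinSetoid G v' u' := fun h =>
    hne (hu'.symm.trans ((Quotient.sound h).symm.trans hv'))
  have hu'v : ¬ twinSetoid G u' v := fun h => hne (hu'.symm.trans (Quotient.sound h))
  have hadj' : G.Adj u' v :=
    ((adj_iff_of_twinSetoid (Quotient.exact hv') hv'u').mp hadj.symm).symm
  exact (adj_iff_of_twinSetoid (Quotient.exact hu') hu'v).mp hadj'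

lemma adj_iff_ne_and_twinQuotient_adj {u v : V} :
    G.Adj u v ↔ u ≠ v ∧
      (Quotient.mk (twinSetoid G) u = Quotient.mk _ v ∨
        (twinQuotient G).Adj (Quotient.mk _ u) (Quotient.mk _ v)) := by
  refine ⟨fun hadj => ⟨hadj.ne, ?_⟩, ?_⟩
  · by_cases hq : Quotient.mk (twinSetoid G) u = Quotient.mk _ v
    · exact Or.inl hq
    · exact Or.inr (twinQuotient_adj_mk_iff.mpr ⟨hq, hadj⟩)
  · rintro ⟨hne, hq | hq⟩
    · rcases Quotient.exact hq with rfl | htwin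
      · exact absurd rfl hne
      · exact htwin.1
    · exact (twinQuotient_adj_mk_iff.mp hq).2

end TwinQuotient

section MultiLineGraph

variable {V' E E' : Type*}

lemma lineGraph_eq_multiLineGraph {W : Type*} (H : SimpleGraph W) :
    H.lineGraph = multiLineGraph (Subtype.val : H.edgeSet → Sym2 W) := by
  ext
  exact SimpleGraph.lineGraph_adj_iff_exists

lemma multiLineGraph_comp_adj_iff (ends : E → Sym2 V') (f : E' → E) {a b : E'} :
    (multiLineGraph (ends ∘ f)).Adj a b ↔
      a ≠ b ∧ (f a = f b ∨ (multiLineGraph ends).Adj (f a) (f b)) := by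
  refine ⟨fun ⟨hne, x, hxa, hxb⟩ => ⟨hne, ?_⟩, ?_⟩
  · by_cases hf : f a = f b
    · exact Or.inl hf
    · exact Or.inr ⟨hf, x, hxa, hxb⟩
  · rintro ⟨hne, hf | ⟨-, x, hxa, hxb⟩⟩
    · refine ⟨hne, (ends (f a)).out.1, Sym2.out_fst_mem _, ?_⟩
      simp only [Function.comp_apply, ← hf, Sym2.out_fst_mem]
    · exact ⟨hne, x, hxa, hxb⟩

lemma multiLineGraph_sym2Map_comp {W : Type*} {f : V' → W} (hf : Function.Injective f)
    (ends : E → Sym2 V') : multiLineGraph (Sym2.map f ∘ ends) = multiLineGraph ends := by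
  ext a b
  simp only [multiLineGraph, Function.comp_apply, Sym2.mem_map]
  refine and_congr_right fun _ => ⟨?_, fun ⟨x, hxa, hxb⟩ => ⟨f x, ⟨x, hxa, rfl⟩, x, hxb, rfl⟩⟩
  rintro ⟨-, ⟨x, hxa, rfl⟩, y, hyb, hyx⟩
  exact ⟨x, hxa, hf hyx ▸ hyb⟩

def multiLineGraphCompEquiv (ends : E → Sym2 V') (e : E' ≃ E) :
    multiLineGraph (ends ∘ e) ≃g multiLineGraph ends :=
  ⟨e, by simp [multiLineGraph]⟩

lemma eq_multiLineGraph_of_twinQuotient_iso {V : Type*} {G : SimpleGraph V} {ends : E → Sym2 V'}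
    (φ : twinQuotient G ≃g multiLineGraph ends) :
    G = multiLineGraph (ends ∘ φ ∘ Quotient.mk (twinSetoid G)) := by
  ext u v
  rw [adj_iff_ne_and_twinQuotient_adj, multiLineGraph_comp_adj_iff, Function.comp_apply,
    Function.comp_apply, φ.map_adj_iff, φ.injective.eq_iff]

end MultiLineGraph

/-- If the twin-quotient of `G` is isomorphic to the line graph of some simple graph,
then `G` is a line graph of a multigraph: there are a vertex type `V'`, an edge type
`E'` and a loopless endpoint map `ends : E' → Sym2 V'` such that `G` is isomorphic to
the graph on `E'` in which distinct edges are adjacent iff their endpoints meet. -/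
theorem isLineGraphOfMultigraph_of_twinQuotient_lineGraph {V : Type u} {W : Type v}
    (G : SimpleGraph V) (H' : SimpleGraph W)
    (h : Nonempty (twinQuotient G ≃g H'.lineGraph)) :
    ∃ (V' E' : Type (max u v)) (ends : E' → Sym2 V'),
      (∀ e, ¬ (ends e).IsDiag) ∧ Nonempty (G ≃g multiLineGraph ends) := by
  obtain ⟨φ⟩ := h
  rw [lineGraph_eq_multiLineGraph] at φ
  have hG := eq_multiLineGraph_of_twinQuotient_iso φ
  refine ⟨ULift.{u} W, ULift.{v} V,
    Sym2.map ULift.up ∘ (Subtype.val ∘ φ ∘ Quotient.mk _) ∘ Equiv.ulift, fun e => ?_, ⟨?_⟩⟩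
  · rw [Function.comp_apply, Sym2.isDiag_map ULift.up_injective]
    exact H'.not_isDiag_of_mem_edgeSet (φ _).2
  · rw [multiLineGraph_sym2Map_comp ULift.up_injective]
    have hφ : G ≃g multiLineGraph (Subtype.val ∘ φ ∘ Quotient.mk _) := hG ▸ .refl
    exact hφ.trans (multiLineGraphCompEquiv _ Equiv.ulift).symm
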